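/- Translation of matrix-centre realizations: Let (A,b,c) be a matrix-centre realization at Y ∈ (ℂ^{n×n})^d on H, let m ≥ 1 and let X ∈ D^Y_m(A). Define the translated realization (A',b',c') at X on H' := ℂ^m⊗H by A'_j(G) := L_A(X − I_m⊗Y)^{-1}(id_m⊗A_j)(G) for G ∈ ℂ^{mn×mn}, b' := I_m⊗b, c' := L_A(X − I_m⊗Y)^{-1}(I_m⊗c). Then for every k ≥ 1 and every Z ∈ (ℂ^{kmn×kmn})^d: L_A(Z − I_{km}⊗Y) is invertible if and only if L_{A'}(Z − I_k⊗X) is invertible (i.e. D^Y_{km}(A) = D^X_k(A')), and in that case L_A(Z − I_{km}⊗Y)^{-1} = L_{A'}(Z − I_k⊗X)^{-1} (I_k ⊗ L_A(X − I_m⊗Y)^{-1}); consequently the quantized transfer functions agree: (I_{km}⊗b)^* L_A(Z − I_{km}⊗Y)^{-1} (I_{km}⊗c) = (I_k⊗b')^* L_{A'}(Z − I_k⊗X)^{-1} (I_k⊗c'). -/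

import Mathlib

set_option synthInstance.maxHeartbeats 1000000
set_option maxHeartbeats 1000000

noncomputable section
namespace MC

/-- Projection onto the `p`-th summand of the Hilbert direct sum of copies of `E`. -/
def projL (ι : Type*) [Fintype ι] (E : Type*) [NormedAddCommGroup E] [InnerProductSpace ℂ E]
    (p : ι) : PiLp 2 (fun _ : ι => E) →L[ℂ] E :=
  PiLp.proj 2 (fun _ : ι => E) p

/-- Inclusion of the `p`-th summand into the Hilbert direct sum of copies of `E`. -/
def inclL (ι : Type*) [Fintype ι] [DecidableEq ι] (E : Type*) [NormedAddCommGroup E]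
    [InnerProductSpace ℂ E] (p : ι) : E →L[ℂ] PiLp 2 (fun _ : ι => E) :=
  (PiLp.continuousLinearEquiv 2 ℂ (fun _ : ι => E)).symm.toContinuousLinearMap.comp
    (ContinuousLinearMap.pi (fun q => if q = p then ContinuousLinearMap.id ℂ E else 0))

variable {E : Type*} [NormedAddCommGroup E] [InnerProductSpace ℂ E]

instance piLpCompleteSpace {ι : Type*} [Fintype ι] [CompleteSpace E] :
    CompleteSpace (PiLp 2 (fun _ : ι => E)) :=
  inferInstance

/-- The `(p,q)` block (an `ν × ν` matrix) of a block matrix indexed by `μ × ν`. -/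
def blk {μ ν : Type*} (Z : Matrix (μ × ν) (μ × ν) ℂ) (p q : μ) : Matrix ν ν ℂ :=
  Matrix.of fun i j => Z (p, i) (q, j)

/-- The ampliation `(id_μ ⊗ A)(Z)` of a map `A : ℂ^{ν×ν} → B(E)` applied to a block
matrix `Z`, acting on the Hilbert direct sum `ℂ^μ ⊗ E`. -/
def amp {μ ν : Type*} [Fintype μ] [DecidableEq μ]
    (A : Matrix ν ν ℂ → (E →L[ℂ] E)) (Z : Matrix (μ × ν) (μ × ν) ℂ) :
    PiLp 2 (fun _ : μ => E) →L[ℂ] PiLp 2 (fun _ : μ => E) :=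
  ∑ p, ∑ q, (inclL μ E p).comp ((A (blk Z p q)).comp (projL μ E q))

/-- The linear pencil `L_A(X) = I - Σ_j (id_μ ⊗ A_j)(X_j)`. -/
def pencil {d : ℕ} {μ ν : Type*} [Fintype μ] [DecidableEq μ]
    (A : Fin d → Matrix ν ν ℂ → (E →L[ℂ] E)) (X : Fin d → Matrix (μ × ν) (μ × ν) ℂ) :
    PiLp 2 (fun _ : μ => E) →L[ℂ] PiLp 2 (fun _ : μ => E) :=
  1 - ∑ j, amp (A j) (X j)

/-- `I_μ ⊗ Y` as a block matrix. -/
def oneKron (μ : Type*) [DecidableEq μ] {ν : Type*} (Y : Matrix ν ν ℂ) :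
    Matrix (μ × ν) (μ × ν) ℂ :=
  Matrix.of fun p q => if p.1 = q.1 then Y p.2 q.2 else 0

/-- Restriction `ℂ^{μ×ν} → ℂ^ν` onto the `p`-th slot. -/
def restrL (μ ν : Type*) [Fintype μ] [Fintype ν] [DecidableEq ν] (p : μ) :
    EuclideanSpace ℂ (μ × ν) →L[ℂ] EuclideanSpace ℂ ν :=
  ∑ i : ν, (EuclideanSpace.proj ((p, i) : μ × ν)).smulRight (EuclideanSpace.single i (1 : ℂ))

/-- The ampliation `I_μ ⊗ b : ℂ^{μ×ν} → ℂ^μ ⊗ E` of `b : ℂ^ν → E`. -/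
def ampVec {μ ν : Type*} [Fintype μ] [DecidableEq μ] [Fintype ν] [DecidableEq ν]
    (b : EuclideanSpace ℂ ν →L[ℂ] E) :
    EuclideanSpace ℂ (μ × ν) →L[ℂ] PiLp 2 (fun _ : μ => E) :=
  ∑ p : μ, (inclL μ E p).comp (b.comp (restrL μ ν p))

/-- The quantized transfer function
`f(X) = (I_μ⊗b)^* L_A(X - I_μ⊗Y)^{-1} (I_μ⊗c)` of a matrix-centre realization,
as an operator on `ℂ^{μ×ν}`. -/
def transfer {d : ℕ} {μ ν : Type*} [Fintype μ] [DecidableEq μ] [Fintype ν] [DecidableEq ν]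
    [CompleteSpace E]
    (A : Fin d → Matrix ν ν ℂ → (E →L[ℂ] E))
    (b c : EuclideanSpace ℂ ν →L[ℂ] E) (Y : Fin d → Matrix ν ν ℂ)
    (X : Fin d → Matrix (μ × ν) (μ × ν) ℂ) :
    EuclideanSpace ℂ (μ × ν) →L[ℂ] EuclideanSpace ℂ (μ × ν) :=
  (ContinuousLinearMap.adjoint (ampVec (μ := μ) b)).comp
    ((Ring.inverse (pencil A (fun j => X j - oneKron μ (Y j)))).comp (ampVec c))

/-- The column norm of a `d`-tuple of matrices: the operator norm of the column
`(X_1; …; X_d)`. -/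
def colNorm {d : ℕ} {ι : Type*} [Fintype ι] [DecidableEq ι] (X : Fin d → Matrix ι ι ℂ) : ℝ :=
  ‖LinearMap.toContinuousLinearMap
      (Matrix.toEuclideanLin
        (Matrix.of fun (pq : Fin d × ι) (r : ι) => X pq.1 pq.2 r))‖

/-- The word operator `A^ω(G_1,…,G_ℓ) = A_{i_1}(G_1) ⋯ A_{i_ℓ}(G_ℓ)`, encoded by the
list `[(i_1,G_1),…,(i_ℓ,G_ℓ)]`; the empty word gives the identity. -/
def wordOp {d : ℕ} {ν : Type*}
    (A : Fin d → Matrix ν ν ℂ → (E →L[ℂ] E)) :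
    List (Fin d × Matrix ν ν ℂ) → (E →L[ℂ] E)
  | [] => 1
  | g :: t => (A g.1 g.2) * wordOp A t

/-- The adjoint word operator `A^{ω;†}(G_1,…,G_ℓ) = A_{i_ℓ}(G_ℓ^*)^* ⋯ A_{i_1}(G_1^*)^*`. -/
def wordOpDag {d : ℕ} {ν : Type*} [CompleteSpace E]
    (A : Fin d → Matrix ν ν ℂ → (E →L[ℂ] E))
    (l : List (Fin d × Matrix ν ν ℂ)) : E →L[ℂ] E :=
  ContinuousLinearMap.adjoint (wordOp A (l.map fun g => (g.1, g.2.conjTranspose)))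

/-- The controllable subspace `C_{A,c}`. -/
def ctrlSpace {d : ℕ} {ν : Type*} [Fintype ν]
    (A : Fin d → Matrix ν ν ℂ → (E →L[ℂ] E))
    (c : EuclideanSpace ℂ ν →L[ℂ] E) : Submodule ℂ E :=
  (Submodule.span ℂ {x : E | ∃ l v, x = wordOp A l (c v)}).topologicalClosure

/-- The observable subspace `O_{A†,b}`. -/
def obsSpace {d : ℕ} {ν : Type*} [Fintype ν] [CompleteSpace E]
    (A : Fin d → Matrix ν ν ℂ → (E →L[ℂ] E))
    (b : EuclideanSpace ℂ ν →L[ℂ] E) : Submodule ℂ E :=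
  (Submodule.span ℂ {x : E | ∃ l u, x = wordOpDag A l (b u)}).topologicalClosure

/-- Minimality: controllable and observable. -/
def Minimal {d : ℕ} {ν : Type*} [Fintype ν] [CompleteSpace E]
    (A : Fin d → Matrix ν ν ℂ → (E →L[ℂ] E))
    (b c : EuclideanSpace ℂ ν →L[ℂ] E) : Prop :=
  ctrlSpace A c = ⊤ ∧ obsSpace A b = ⊤

/-- Two matrix-centre realizations at the same centre `Y` are analytically equivalent at `Y`
if on some uniform column-ball about `Y` both pencils are invertible and the quantized
transfer functions agree. -/
def AnalyticEquiv {d n : ℕ} {E F : Type*}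
    [NormedAddCommGroup E] [InnerProductSpace ℂ E] [CompleteSpace E]
    [NormedAddCommGroup F] [InnerProductSpace ℂ F] [CompleteSpace F]
    (A : Fin d → Matrix (Fin n) (Fin n) ℂ → (E →L[ℂ] E))
    (b c : EuclideanSpace ℂ (Fin n) →L[ℂ] E)
    (A' : Fin d → Matrix (Fin n) (Fin n) ℂ → (F →L[ℂ] F))
    (b' c' : EuclideanSpace ℂ (Fin n) →L[ℂ] F)
    (Y : Fin d → Matrix (Fin n) (Fin n) ℂ) : Prop :=
  ∃ r > 0, ∀ m : ℕ, 0 < m → ∀ X : Fin d → Matrix (Fin m × Fin n) (Fin m × Fin n) ℂ,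
    colNorm (fun j => X j - oneKron (Fin m) (Y j)) < r →
      IsUnit (pencil A fun j => X j - oneKron (Fin m) (Y j)) ∧
      IsUnit (pencil A' fun j => X j - oneKron (Fin m) (Y j)) ∧
      transfer A b c Y X = transfer A' b' c' Y X

/-- The structure maps of the realization `(A,b,c)` translated from the centre `Y` to the
matrix point `X ∈ D^Y_m(A)`: `A'_j(G) = L_A(X-I_m⊗Y)^{-1} (id_m⊗A_j)(G)`. -/
def transA {d n m : ℕ} (Y : Fin d → Matrix (Fin n) (Fin n) ℂ)
    (A : Fin d → Matrix (Fin n) (Fin n) ℂ → (E →L[ℂ] E))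
    (X : Fin d → Matrix (Fin m × Fin n) (Fin m × Fin n) ℂ)
    (j : Fin d) (G : Matrix (Fin m × Fin n) (Fin m × Fin n) ℂ) :
    PiLp 2 (fun _ : Fin m => E) →L[ℂ] PiLp 2 (fun _ : Fin m => E) :=
  (Ring.inverse (pencil A (fun i => X i - oneKron (Fin m) (Y i)))).comp (amp (A j) G)

/-- Translated `b`: `b' = I_m ⊗ b`. -/
def transB {n m : ℕ} (b : EuclideanSpace ℂ (Fin n) →L[ℂ] E) :
    EuclideanSpace ℂ (Fin m × Fin n) →L[ℂ] PiLp 2 (fun _ : Fin m => E) :=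
  ampVec (μ := Fin m) b

/-- Translated `c`: `c' = L_A(X-I_m⊗Y)^{-1} (I_m ⊗ c)`. -/
def transC {d n m : ℕ} (Y : Fin d → Matrix (Fin n) (Fin n) ℂ)
    (A : Fin d → Matrix (Fin n) (Fin n) ℂ → (E →L[ℂ] E))
    (X : Fin d → Matrix (Fin m × Fin n) (Fin m × Fin n) ℂ)
    (c : EuclideanSpace ℂ (Fin n) →L[ℂ] E) :
    EuclideanSpace ℂ (Fin m × Fin n) →L[ℂ] PiLp 2 (fun _ : Fin m => E) :=
  (Ring.inverse (pencil A (fun i => X i - oneKron (Fin m) (Y i)))).comp (ampVec c)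

/-- The diagonal ampliation `I_μ ⊗ T` of an operator `T` on `E`. -/
def diagAmp {μ : Type*} [Fintype μ] [DecidableEq μ] (T : E →L[ℂ] E) :
    PiLp 2 (fun _ : μ => E) →L[ℂ] PiLp 2 (fun _ : μ => E) :=
  ∑ p, (inclL μ E p).comp (T.comp (projL μ E p))

/-- The canonical linear isometry `ℂ^{κ×μ} ⊗ E ≅ ℂ^κ ⊗ (ℂ^μ ⊗ E)`. -/
def curryIso (κ μ : Type*) [Fintype κ] [Fintype μ] (E : Type*) [NormedAddCommGroup E]
    [InnerProductSpace ℂ E] :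
    PiLp 2 (fun _ : κ × μ => E) ≃ₗᵢ[ℂ] PiLp 2 (fun _ : κ => PiLp 2 (fun _ : μ => E)) :=
  (LinearIsometryEquiv.piLpCongrLeft 2 ℂ E (Equiv.sigmaEquivProd κ μ).symm).trans
    (LinearIsometryEquiv.piLpCurry ℂ 2 (fun _ : κ => fun _ : μ => E))

section Aux
variable {E : Type*} [NormedAddCommGroup E] [InnerProductSpace ℂ E]

lemma inclL_apply {ι : Type*} [Fintype ι] [DecidableEq ι] (p q : ι) (x : E) :
    inclL ι E p x q = if q = p then x else 0 := by
  change (if q = p then ContinuousLinearMap.id ℂ E else 0) x = _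
  split <;> simp

lemma projL_apply {ι : Type*} [Fintype ι] (p : ι) (x : PiLp 2 (fun _ : ι => E)) :
    projL ι E p x = x p := rfl

lemma sum_clm_apply_pi {ι κ : Type*} [Fintype ι] (s : Finset κ)
    (f : κ → (PiLp 2 (fun _ : ι => E) →L[ℂ] PiLp 2 (fun _ : ι => E)))
    (x : PiLp 2 (fun _ : ι => E)) (r : ι) :
    (∑ j ∈ s, f j) x r = ∑ j ∈ s, f j x r := by
  classical
  induction s using Finset.induction with
  | empty => rfl
  | insert a t h ih =>
    rw [Finset.sum_insert h, Finset.sum_insert h, ContinuousLinearMap.add_apply, ← ih]; rfl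

lemma amp_apply {μ ν : Type*} [Fintype μ] [DecidableEq μ]
    (A : Matrix ν ν ℂ → (E →L[ℂ] E)) (Z : Matrix (μ × ν) (μ × ν) ℂ)
    (x : PiLp 2 (fun _ : μ => E)) (r : μ) :
    amp A Z x r = ∑ q, A (blk Z r q) (x q) := by
  simp only [amp]
  rw [sum_clm_apply_pi]
  have : ∀ p, ((∑ q, (inclL μ E p).comp ((A (blk Z p q)).comp (projL μ E q))) x) r
      = ∑ q, (inclL μ E p ((A (blk Z p q)) (x q))) r := by
    intro p; rw [sum_clm_apply_pi]; rfl
  simp only [this, inclL_apply]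
  rw [Finset.sum_comm]
  simp

lemma diagAmp_apply {ι : Type*} [Fintype ι] [DecidableEq ι] (T : E →L[ℂ] E)
    (x : PiLp 2 (fun _ : ι => E)) (r : ι) :
    diagAmp T x r = T (x r) := by
  simp only [diagAmp]
  rw [sum_clm_apply_pi]
  have : ∀ p, ((inclL ι E p).comp (T.comp (projL ι E p)) x) r
      = (inclL ι E p (T (x p))) r := fun p => rfl
  simp only [this, inclL_apply]
  simp

end Aux
section Aux2
variable {E : Type*} [NormedAddCommGroup E] [InnerProductSpace ℂ E]

lemma clm_pi_ext {ι : Type*} {X : Type*} [NormedAddCommGroup X] [NormedSpace ℂ X]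
    [Fintype ι]
    {F G : X →L[ℂ] PiLp 2 (fun _ : ι => E)} (h : ∀ x r, F x r = G x r) : F = G := by
  ext x
  exact h x _

lemma sum_clm_apply_pi' {ι κ : Type*} [Fintype ι] {X : Type*} [NormedAddCommGroup X]
    [NormedSpace ℂ X] (s : Finset κ)
    (f : κ → (X →L[ℂ] PiLp 2 (fun _ : ι => E)))
    (x : X) (r : ι) :
    (∑ j ∈ s, f j) x r = ∑ j ∈ s, f j x r := by
  classical
  induction s using Finset.induction with
  | empty => rfl
  | insert a t h ih =>
    rw [Finset.sum_insert h, Finset.sum_insert h, ContinuousLinearMap.add_apply, ← ih]; rfl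

lemma blk_sub {μ ν : Type*} (Z W : Matrix (μ × ν) (μ × ν) ℂ) (p q : μ) :
    blk (Z - W) p q = blk Z p q - blk W p q := by
  ext i j; simp [blk]

lemma blk_add {μ ν : Type*} (Z W : Matrix (μ × ν) (μ × ν) ℂ) (p q : μ) :
    blk (Z + W) p q = blk Z p q + blk W p q := by
  ext i j; simp [blk]

lemma blk_oneKron {μ ν : Type*} [DecidableEq μ] (M : Matrix ν ν ℂ) (p q : μ) :
    blk (oneKron μ M) p q = if p = q then M else 0 := by
  ext i j; simp only [blk, oneKron, Matrix.of_apply]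
  split <;> simp_all

lemma amp_add {μ ν : Type*} [Fintype μ] [DecidableEq μ] [Fintype ν]
    {A : Matrix ν ν ℂ → (E →L[ℂ] E)} (hA : IsLinearMap ℂ A)
    (Z W : Matrix (μ × ν) (μ × ν) ℂ) :
    amp A (Z + W) = amp A Z + amp A W := by
  refine clm_pi_ext (fun x r => ?_)
  rw [ContinuousLinearMap.add_apply]
  have : (amp A Z x + amp A W x) r = amp A Z x r + amp A W x r := rfl
  rw [this]
  simp only [amp_apply, blk_add, hA.map_add, ContinuousLinearMap.add_apply,
    Finset.sum_add_distrib]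

lemma amp_sub {μ ν : Type*} [Fintype μ] [DecidableEq μ] [Fintype ν]
    {A : Matrix ν ν ℂ → (E →L[ℂ] E)} (hA : IsLinearMap ℂ A)
    (Z W : Matrix (μ × ν) (μ × ν) ℂ) :
    amp A (Z - W) = amp A Z - amp A W := by
  refine clm_pi_ext (fun x r => ?_)
  rw [ContinuousLinearMap.sub_apply]
  have : (amp A Z x - amp A W x) r = amp A Z x r - amp A W x r := rfl
  rw [this]
  have hsub : ∀ (G G' : Matrix ν ν ℂ), A (G - G') = A G - A G' := fun G G' =>
    (hA.mk' A).map_sub G G'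
  simp only [amp_apply, blk_sub, hsub, ContinuousLinearMap.sub_apply,
    Finset.sum_sub_distrib]

lemma amp_isLinear {μ ν : Type*} [Fintype μ] [DecidableEq μ] [Fintype ν]
    {A : Matrix ν ν ℂ → (E →L[ℂ] E)} (hA : IsLinearMap ℂ A) :
    IsLinearMap ℂ (amp (μ := μ) A) := by
  constructor
  · exact amp_add hA
  · intro a Z
    refine clm_pi_ext (fun x r => ?_)
    have h2 : (a • amp A Z) x r = a • (amp A Z x r) := rfl
    rw [h2]
    have hs : ∀ p q, blk (a • Z) p q = a • blk Z p q := by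
      intro p q; ext i j; simp [blk]
    simp only [amp_apply, hs, hA.map_smul, ContinuousLinearMap.smul_apply,
      Finset.smul_sum]

lemma diagAmp_comp {ι : Type*} [Fintype ι] [DecidableEq ι] (T T' : E →L[ℂ] E) :
    diagAmp (μ := ι) (T.comp T') = (diagAmp T).comp (diagAmp T') := by
  refine clm_pi_ext (fun x r => ?_)
  have : ((diagAmp T).comp (diagAmp T')) x r = diagAmp T (diagAmp T' x) r := rfl
  rw [this]
  simp [diagAmp_apply]

lemma diagAmp_one {ι : Type*} [Fintype ι] [DecidableEq ι] :
    diagAmp (μ := ι) (1 : E →L[ℂ] E) = 1 := by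
  refine clm_pi_ext (fun x r => ?_)
  simp [diagAmp_apply]

lemma diagAmp_sub {ι : Type*} [Fintype ι] [DecidableEq ι] (T T' : E →L[ℂ] E) :
    diagAmp (μ := ι) (T - T') = diagAmp T - diagAmp T' := by
  refine clm_pi_ext (fun x r => ?_)
  have : (diagAmp (μ := ι) T - diagAmp (μ := ι) T') x r = diagAmp T x r - diagAmp T' x r := rfl
  rw [this]
  simp [diagAmp_apply]

lemma diagAmp_sum {ι κ : Type*} [Fintype ι] [DecidableEq ι] (s : Finset κ)
    (T : κ → (E →L[ℂ] E)) :
    diagAmp (μ := ι) (∑ j ∈ s, T j) = ∑ j ∈ s, diagAmp (T j) := by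
  refine clm_pi_ext (fun x r => ?_)
  rw [sum_clm_apply_pi']
  simp [diagAmp_apply, sum_clm_apply_pi]

lemma amp_oneKron {μ ν : Type*} [Fintype μ] [DecidableEq μ] [Fintype ν]
    {A : Matrix ν ν ℂ → (E →L[ℂ] E)} (h0 : A 0 = 0) (M : Matrix ν ν ℂ) :
    amp (μ := μ) A (oneKron μ M) = diagAmp (A M) := by
  refine clm_pi_ext (fun x r => ?_)
  simp only [amp_apply, diagAmp_apply, blk_oneKron]
  rw [Finset.sum_eq_single r]
  · simp
  · intro q _ hq
    rw [if_neg (fun h => hq h.symm), h0]; rfl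
  · simp

lemma diagAmp_comp_amp {μ ν : Type*} [Fintype μ] [DecidableEq μ] [Fintype ν]
    (S : E →L[ℂ] E) (B : Matrix ν ν ℂ → (E →L[ℂ] E)) (W : Matrix (μ × ν) (μ × ν) ℂ) :
    amp (fun G => S.comp (B G)) W = (diagAmp S).comp (amp B W) := by
  refine clm_pi_ext (fun x r => ?_)
  have : ((diagAmp S).comp (amp B W)) x r = S (amp B W x r) := by
    rw [ContinuousLinearMap.comp_apply, diagAmp_apply]
  rw [this]
  simp [amp_apply]

end Aux2
section Aux3
variable {E : Type*} [NormedAddCommGroup E] [InnerProductSpace ℂ E]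

lemma curryIso_apply {κ μ : Type*} [Fintype κ] [Fintype μ]
    (x : PiLp 2 (fun _ : κ × μ => E)) (p : κ) (s : μ) :
    curryIso κ μ E x p s = x (p, s) := rfl

lemma curryIso_symm_apply {κ μ : Type*} [Fintype κ] [Fintype μ]
    (y : PiLp 2 (fun _ : κ => PiLp 2 (fun _ : μ => E))) (p : κ) (s : μ) :
    (curryIso κ μ E).symm y (p, s) = y p s := rfl

lemma piLpCongrLeft_apply' {α β : Type*} [Fintype α] [Fintype β] (e : α ≃ β)
    (x : PiLp 2 (fun _ : α => ℂ)) (q : β) :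
    LinearIsometryEquiv.piLpCongrLeft 2 ℂ ℂ e x q = x (e.symm q) := rfl

end Aux3
section Aux4
variable {E : Type*} [NormedAddCommGroup E] [InnerProductSpace ℂ E]

lemma pilp_sum_apply {ι κ : Type*} (s : Finset κ)
    (f : κ → PiLp 2 (fun _ : ι => E)) (r : ι) :
    (∑ j ∈ s, f j) r = ∑ j ∈ s, f j r := by
  classical
  induction s using Finset.induction with
  | empty => rfl
  | insert a t h ih =>
    rw [Finset.sum_insert h, Finset.sum_insert h, ← ih]; rfl

lemma blk_blk_reindex {κ μ ν : Type*} (W : Matrix ((κ × μ) × ν) ((κ × μ) × ν) ℂ)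
    (p q : κ) (s t : μ) :
    blk (blk (Matrix.reindex (Equiv.prodAssoc κ μ ν) (Equiv.prodAssoc κ μ ν) W) p q) s t
      = blk W (p, s) (q, t) := by
  ext i j; rfl

/-- Conjugation of an ampliation by the currying isometry. -/
lemma curry_conj_amp {κ μ ν : Type*} [Fintype κ] [DecidableEq κ] [Fintype μ]
    [DecidableEq μ] [Fintype ν]
    (A : Matrix ν ν ℂ → (E →L[ℂ] E)) (W : Matrix ((κ × μ) × ν) ((κ × μ) × ν) ℂ) :
    ((curryIso κ μ E).toLinearIsometry.toContinuousLinearMap).comp (amp A W)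
      = (amp (fun G => amp A G)
          (Matrix.reindex (Equiv.prodAssoc κ μ ν) (Equiv.prodAssoc κ μ ν) W)).comp
        ((curryIso κ μ E).toLinearIsometry.toContinuousLinearMap) := by
  ext x p s
  have hL : (((curryIso κ μ E).toLinearIsometry.toContinuousLinearMap).comp (amp A W)) x p s
      = amp A W x (p, s) := rfl
  rw [hL]
  set Ucl := (curryIso κ μ E).toLinearIsometry.toContinuousLinearMap with hU
  set W' := Matrix.reindex (Equiv.prodAssoc κ μ ν) (Equiv.prodAssoc κ μ ν) W with hW
  have hR : ∀ q, amp A (blk W' p q) (Ucl x q) s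
      = ∑ t, A (blk W (p, s) (q, t)) (x (q, t)) := by
    intro q
    rw [amp_apply]
    refine Finset.sum_congr rfl (fun t _ => ?_)
    rw [blk_blk_reindex]
    rfl
  have h1 : ((amp (fun G => amp A G) W').comp Ucl) x p = ∑ q, amp A (blk W' p q) (Ucl x q) := by
    rw [ContinuousLinearMap.comp_apply, amp_apply]
  calc amp A W x (p, s) = ∑ q, ∑ t, A (blk W (p, s) (q, t)) (x (q, t)) := by
        rw [amp_apply, Fintype.sum_prod_type]
    _ = ∑ q, amp A (blk W' p q) (Ucl x q) s :=
        Finset.sum_congr rfl (fun q _ => (hR q).symm)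
    _ = (∑ q, amp A (blk W' p q) (Ucl x q)) s := (pilp_sum_apply _ _ _).symm
    _ = ((amp (fun G => amp A G) W').comp Ucl) x p s := by rw [h1]

lemma oneKron_sub {μ ν : Type*} [DecidableEq μ] (M N : Matrix ν ν ℂ) :
    oneKron μ (M - N) = oneKron μ M - oneKron μ N := by
  ext p q; simp only [oneKron, Matrix.of_apply, Matrix.sub_apply]
  split <;> simp

lemma reindex_oneKron {κ μ ν : Type*} [DecidableEq κ] [DecidableEq μ]
    (Y : Matrix ν ν ℂ) :
    Matrix.reindex (Equiv.prodAssoc κ μ ν) (Equiv.prodAssoc κ μ ν)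
        (oneKron (κ × μ) Y)
      = oneKron κ (oneKron μ Y) := by
  ext p q
  obtain ⟨p1, p2, p3⟩ := p
  obtain ⟨q1, q2, q3⟩ := q
  simp only [Matrix.reindex_apply, Matrix.submatrix_apply, oneKron, Matrix.of_apply,
    Equiv.prodAssoc_symm_apply, Prod.mk.injEq]
  by_cases h1 : p1 = q1 <;> by_cases h2 : p2 = q2 <;> simp [h1, h2]

lemma reindex_sub {κ μ ν : Type*} (Z W : Matrix ((κ × μ) × ν) ((κ × μ) × ν) ℂ) :
    Matrix.reindex (Equiv.prodAssoc κ μ ν) (Equiv.prodAssoc κ μ ν) (Z - W)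
      = Matrix.reindex (Equiv.prodAssoc κ μ ν) (Equiv.prodAssoc κ μ ν) Z
        - Matrix.reindex (Equiv.prodAssoc κ μ ν) (Equiv.prodAssoc κ μ ν) W := by
  ext p q; rfl

end Aux4
section Aux5
variable {E : Type*} [NormedAddCommGroup E] [InnerProductSpace ℂ E] [CompleteSpace E]

lemma hone1 {F G : Type*} [NormedAddCommGroup F] [NormedSpace ℂ F]
    [NormedAddCommGroup G] [NormedSpace ℂ G] (f : F →L[ℂ] G) :
    (1 : G →L[ℂ] G).comp f = f := by ext x; rfl

lemma hone2 {F G : Type*} [NormedAddCommGroup F] [NormedSpace ℂ F]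
    [NormedAddCommGroup G] [NormedSpace ℂ G] (f : F →L[ℂ] G) :
    f.comp (1 : F →L[ℂ] F) = f := by ext x; rfl

lemma key_pencil {d n m k : ℕ}
    (Y : Fin d → Matrix (Fin n) (Fin n) ℂ)
    (A : Fin d → Matrix (Fin n) (Fin n) ℂ → (E →L[ℂ] E)) (hA : ∀ j, IsLinearMap ℂ (A j))
    (X : Fin d → Matrix (Fin m × Fin n) (Fin m × Fin n) ℂ)
    (hX : IsUnit (pencil A (fun j => X j - oneKron (Fin m) (Y j))))
    (Z : Fin d → Matrix ((Fin k × Fin m) × Fin n) ((Fin k × Fin m) × Fin n) ℂ) :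
    ((curryIso (Fin k) (Fin m) E).toLinearIsometry.toContinuousLinearMap).comp
        (pencil A (fun j => Z j - oneKron (Fin k × Fin m) (Y j)))
      = ((diagAmp (pencil A (fun i => X i - oneKron (Fin m) (Y i)))).comp
          (pencil (transA Y A X)
            (fun j => Matrix.reindex (Equiv.prodAssoc (Fin k) (Fin m) (Fin n))
                (Equiv.prodAssoc (Fin k) (Fin m) (Fin n)) (Z j) -
              oneKron (Fin k) (X j)))).comp
          ((curryIso (Fin k) (Fin m) E).toLinearIsometry.toContinuousLinearMap) := by
  set L := pencil A (fun i => X i - oneKron (Fin m) (Y i)) with hL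
  set S := Ring.inverse L with hS
  set Ucl := (curryIso (Fin k) (Fin m) E).toLinearIsometry.toContinuousLinearMap with hU
  set W := fun j => Matrix.reindex (Equiv.prodAssoc (Fin k) (Fin m) (Fin n))
      (Equiv.prodAssoc (Fin k) (Fin m) (Fin n)) (Z j) - oneKron (Fin k) (X j) with hW
  set M := fun j => amp (fun G => amp (A j) G) (W j) with hM
  have hampz : ∀ j, amp (μ := Fin m) (A j) 0 = 0 := fun j =>
    (amp_isLinear (hA j)).map_zero
  -- decomposition of the reindexed matrices
  have h1 : ∀ j, Matrix.reindex (Equiv.prodAssoc (Fin k) (Fin m) (Fin n))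
      (Equiv.prodAssoc (Fin k) (Fin m) (Fin n)) (Z j - oneKron (Fin k × Fin m) (Y j))
      = W j + oneKron (Fin k) (X j - oneKron (Fin m) (Y j)) := by
    intro j
    rw [reindex_sub, reindex_oneKron, oneKron_sub, hW]
    exact (sub_add_sub_cancel _ _ _).symm
  -- conjugation of each ampliation
  have h2 : ∀ j, Ucl.comp (amp (A j) (Z j - oneKron (Fin k × Fin m) (Y j)))
      = (M j + diagAmp (amp (A j) (X j - oneKron (Fin m) (Y j)))).comp Ucl := by
    intro j
    rw [hU, curry_conj_amp, h1 j, amp_add (amp_isLinear (hA j)),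
      amp_oneKron (hampz j)]
  -- left-hand side
  have hLHS : Ucl.comp (pencil A (fun j => Z j - oneKron (Fin k × Fin m) (Y j)))
      = (1 - ((∑ j, M j) + ∑ j, diagAmp (amp (A j) (X j - oneKron (Fin m) (Y j))))).comp Ucl := by
    rw [pencil, ContinuousLinearMap.comp_sub, ContinuousLinearMap.comp_finset_sum,
      ContinuousLinearMap.sub_comp, hone1, hone2, ContinuousLinearMap.add_comp,
      ContinuousLinearMap.finset_sum_comp, ContinuousLinearMap.finset_sum_comp,
      ← Finset.sum_add_distrib]
    congr 1
    refine Finset.sum_congr rfl (fun j _ => ?_)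
    rw [h2 j, ContinuousLinearMap.add_comp]
  -- translated pencil
  have hQ : pencil (transA Y A X) W = 1 - (diagAmp S).comp (∑ j, M j) := by
    rw [pencil, ContinuousLinearMap.comp_finset_sum]
    congr 1
    refine Finset.sum_congr rfl (fun j _ => ?_)
    have : amp (transA Y A X j) (W j) = amp (fun G => S.comp (amp (A j) G)) (W j) := rfl
    rw [this, diagAmp_comp_amp]
  have hLS : L.comp S = 1 := by
    rw [← ContinuousLinearMap.mul_def, hS, hL, Ring.mul_inverse_cancel _ hX]
  have hdL : diagAmp (μ := Fin k) L = 1 - ∑ j, diagAmp (amp (A j) (X j - oneKron (Fin m) (Y j))) := by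
    rw [hL, pencil, diagAmp_sub, diagAmp_one, diagAmp_sum]
  have hRHS : (diagAmp (μ := Fin k) L).comp (pencil (transA Y A X) W)
      = 1 - ((∑ j, M j) + ∑ j, diagAmp (amp (A j) (X j - oneKron (Fin m) (Y j)))) := by
    rw [hQ, ContinuousLinearMap.comp_sub, ← ContinuousLinearMap.comp_assoc,
      ← diagAmp_comp, hLS, diagAmp_one, hone1, hone2, hdL]
    rw [sub_sub, add_comm (∑ j, diagAmp (amp (A j) (X j - oneKron (Fin m) (Y j))))]
  rw [hLHS, hRHS]

end Aux5
section Aux6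

lemma conj_comp {F G : Type*} [NormedAddCommGroup F] [InnerProductSpace ℂ F]
    [NormedAddCommGroup G] [InnerProductSpace ℂ G] (e : F ≃ₗᵢ[ℂ] G) (P Q : F →L[ℂ] F) :
    ((e.toLinearIsometry.toContinuousLinearMap.comp
        (P.comp e.symm.toLinearIsometry.toContinuousLinearMap)).comp
      (e.toLinearIsometry.toContinuousLinearMap.comp
        (Q.comp e.symm.toLinearIsometry.toContinuousLinearMap)))
      = e.toLinearIsometry.toContinuousLinearMap.comp
          ((P.comp Q).comp e.symm.toLinearIsometry.toContinuousLinearMap) := by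
  ext x; simp

lemma isUnit_conj {F G : Type*} [NormedAddCommGroup F] [InnerProductSpace ℂ F]
    [NormedAddCommGroup G] [InnerProductSpace ℂ G] (e : F ≃ₗᵢ[ℂ] G) (P : F →L[ℂ] F) :
    IsUnit (e.toLinearIsometry.toContinuousLinearMap.comp
      (P.comp e.symm.toLinearIsometry.toContinuousLinearMap)) ↔ IsUnit P := by
  constructor
  · intro h
    obtain ⟨R, h1, h2⟩ := isUnit_iff_exists.mp h
    refine isUnit_iff_exists.mpr ⟨e.symm.toLinearIsometry.toContinuousLinearMap.comp
      (R.comp e.toLinearIsometry.toContinuousLinearMap), ?_, ?_⟩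
    · ext x
      have := congrArg (fun (T : G →L[ℂ] G) =>
        e.symm (T (e x))) h1
      simpa using this
    · ext x
      have := congrArg (fun (T : G →L[ℂ] G) =>
        e.symm (T (e x))) h2
      simpa using this
  · intro h
    obtain ⟨R, h1, h2⟩ := isUnit_iff_exists.mp h
    refine isUnit_iff_exists.mpr ⟨e.toLinearIsometry.toContinuousLinearMap.comp
      (R.comp e.symm.toLinearIsometry.toContinuousLinearMap), ?_, ?_⟩
    · ext x
      have := congrArg (fun (T : F →L[ℂ] F) => e (T (e.symm x))) h1
      simpa [ContinuousLinearMap.mul_apply] using this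
    · ext x
      have := congrArg (fun (T : F →L[ℂ] F) => e (T (e.symm x))) h2
      simpa [ContinuousLinearMap.mul_apply] using this

lemma adjoint_isoCLM {F G : Type*} [NormedAddCommGroup F] [InnerProductSpace ℂ F]
    [NormedAddCommGroup G] [InnerProductSpace ℂ G] [CompleteSpace F] [CompleteSpace G]
    (e : F ≃ₗᵢ[ℂ] G) :
    ContinuousLinearMap.adjoint e.toLinearIsometry.toContinuousLinearMap
      = e.symm.toLinearIsometry.toContinuousLinearMap := by
  symm
  rw [ContinuousLinearMap.eq_adjoint_iff]
  intro u v
  simp only [LinearIsometry.coe_toContinuousLinearMap, LinearIsometryEquiv.coe_toLinearIsometry]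
  rw [← LinearIsometryEquiv.inner_map_map e (e.symm u) v, e.apply_symm_apply]

end Aux6
section Aux7
variable {E : Type*} [NormedAddCommGroup E] [InnerProductSpace ℂ E]

lemma restrL_apply {μ ν : Type*} [Fintype μ] [Fintype ν] [DecidableEq ν] (p : μ)
    (x : EuclideanSpace ℂ (μ × ν)) (i : ν) :
    restrL μ ν p x i = x (p, i) := by
  simp only [restrL]
  rw [sum_clm_apply_pi' (E := ℂ)]
  simp only [ContinuousLinearMap.smulRight_apply,
    PiLp.smul_apply, EuclideanSpace.single_apply, smul_eq_mul, mul_ite, mul_one, mul_zero]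
  simp

lemma ampVec_apply {μ ν : Type*} [Fintype μ] [DecidableEq μ] [Fintype ν] [DecidableEq ν]
    (b : EuclideanSpace ℂ ν →L[ℂ] E) (x : EuclideanSpace ℂ (μ × ν)) (p : μ) :
    ampVec b x p = b (restrL μ ν p x) := by
  simp only [ampVec]
  rw [sum_clm_apply_pi']
  have : ∀ q, ((inclL μ E q).comp (b.comp (restrL μ ν q))) x p
      = inclL μ E q (b (restrL μ ν q x)) p := fun q => rfl
  simp only [this, inclL_apply]
  simp

lemma ampVec_comp_left {μ ν : Type*} [Fintype μ] [DecidableEq μ] [Fintype ν] [DecidableEq ν]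
    (T : E →L[ℂ] E) (b : EuclideanSpace ℂ ν →L[ℂ] E) :
    ampVec (μ := μ) (T.comp b) = (diagAmp T).comp (ampVec b) := by
  refine clm_pi_ext (fun x p => ?_)
  have : ((diagAmp T).comp (ampVec b)) x p = T (ampVec b x p) := by
    rw [ContinuousLinearMap.comp_apply, diagAmp_apply]
  rw [this, ampVec_apply, ampVec_apply]
  rfl

/-- `U ∘ (I_{κ×μ} ⊗ b) = (I_κ ⊗ (I_μ ⊗ b)) ∘ V`. -/
lemma curry_ampVec {κ μ ν : Type*} [Fintype κ] [DecidableEq κ] [Fintype μ] [DecidableEq μ]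
    [Fintype ν] [DecidableEq ν] (b : EuclideanSpace ℂ ν →L[ℂ] E) :
    ((curryIso κ μ E).toLinearIsometry.toContinuousLinearMap).comp (ampVec b)
      = (ampVec (μ := κ) (ampVec (μ := μ) b)).comp
        ((LinearIsometryEquiv.piLpCongrLeft 2 ℂ ℂ
          (Equiv.prodAssoc κ μ ν)).toLinearIsometry.toContinuousLinearMap) := by
  ext x p s
  have hL : (((curryIso κ μ E).toLinearIsometry.toContinuousLinearMap).comp (ampVec b)) x p s
      = ampVec b x (p, s) := rfl
  rw [hL, ampVec_apply]
  have hR : ((ampVec (μ := κ) (ampVec (μ := μ) b)).comp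
      ((LinearIsometryEquiv.piLpCongrLeft 2 ℂ ℂ
        (Equiv.prodAssoc κ μ ν)).toLinearIsometry.toContinuousLinearMap)) x p s
      = b (restrL μ ν s (restrL κ (μ × ν) p
          ((LinearIsometryEquiv.piLpCongrLeft 2 ℂ ℂ
            (Equiv.prodAssoc κ μ ν)).toLinearIsometry.toContinuousLinearMap x))) := by
    rw [ContinuousLinearMap.comp_apply]
    have h1 : ∀ y, ampVec (μ := κ) (ampVec (μ := μ) b) y p s
        = ampVec (μ := μ) b (restrL κ (μ × ν) p y) s := by
      intro y
      rw [ampVec_apply (ampVec (μ := μ) b) y p]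
    rw [h1, ampVec_apply]
  rw [hR]
  congr 1
  ext i
  rw [restrL_apply, restrL_apply, restrL_apply]
  rfl

end Aux7
variable {H : Type*} [NormedAddCommGroup H] [InnerProductSpace ℂ H] [CompleteSpace H]

/-- **Translation of matrix-centre realizations.** Translating a realization
`(A,b,c)` at `Y` to a point `X ∈ D^Y_m(A)` yields a realization `(A',b',c')` at `X` with
`D^Y_{km}(A) = D^X_k(A')`, whose resolvent satisfies
`L_A(Z-I_{km}⊗Y)^{-1} = L_{A'}(Z-I_k⊗X)^{-1}(I_k⊗L_A(X-I_m⊗Y)^{-1})` (under the canonical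
identification `ℂ^{km}⊗H ≅ ℂ^k⊗(ℂ^m⊗H)`), and whose quantized transfer function agrees
with that of `(A,b,c)` (under the canonical identification `ℂ^{kmn} ≅ ℂ^{k(mn)}`). -/
theorem translation_of_matrix_centre_realization
    {d n : ℕ} (Y : Fin d → Matrix (Fin n) (Fin n) ℂ)
    (A : Fin d → Matrix (Fin n) (Fin n) ℂ → (H →L[ℂ] H)) (hA : ∀ j, IsLinearMap ℂ (A j))
    (b c : EuclideanSpace ℂ (Fin n) →L[ℂ] H)
    (m : ℕ) (hm : 0 < m) (X : Fin d → Matrix (Fin m × Fin n) (Fin m × Fin n) ℂ)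
    (hX : IsUnit (pencil A (fun j => X j - oneKron (Fin m) (Y j))))
    (k : ℕ) (hk : 0 < k)
    (Z : Fin d → Matrix ((Fin k × Fin m) × Fin n) ((Fin k × Fin m) × Fin n) ℂ) :
    (IsUnit (pencil A (fun j => Z j - oneKron (Fin k × Fin m) (Y j))) ↔
      IsUnit (pencil (transA Y A X)
        (fun j => Matrix.reindex (Equiv.prodAssoc (Fin k) (Fin m) (Fin n))
            (Equiv.prodAssoc (Fin k) (Fin m) (Fin n)) (Z j) -
          oneKron (Fin k) (X j)))) ∧
    (IsUnit (pencil A (fun j => Z j - oneKron (Fin k × Fin m) (Y j))) →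
      ((curryIso (Fin k) (Fin m) H).toLinearIsometry.toContinuousLinearMap.comp
          ((Ring.inverse (pencil A (fun j => Z j - oneKron (Fin k × Fin m) (Y j)))).comp
            ((curryIso (Fin k) (Fin m) H).symm.toLinearIsometry.toContinuousLinearMap)) =
        (Ring.inverse (pencil (transA Y A X)
            (fun j => Matrix.reindex (Equiv.prodAssoc (Fin k) (Fin m) (Fin n))
                (Equiv.prodAssoc (Fin k) (Fin m) (Fin n)) (Z j) -
              oneKron (Fin k) (X j)))).comp
          (diagAmp (μ := Fin k)
            (Ring.inverse (pencil A (fun i => X i - oneKron (Fin m) (Y i))))))) ∧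
    (IsUnit (pencil A (fun j => Z j - oneKron (Fin k × Fin m) (Y j))) →
      transfer A b c Y Z =
        ((LinearIsometryEquiv.piLpCongrLeft 2 ℂ ℂ
            (Equiv.prodAssoc (Fin k) (Fin m) (Fin n))).symm.toLinearIsometry.toContinuousLinearMap).comp
          ((transfer (transA Y A X) (transB b) (transC Y A X c) X
              (fun j => Matrix.reindex (Equiv.prodAssoc (Fin k) (Fin m) (Fin n))
                (Equiv.prodAssoc (Fin k) (Fin m) (Fin n)) (Z j))).comp
            ((LinearIsometryEquiv.piLpCongrLeft 2 ℂ ℂ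
              (Equiv.prodAssoc (Fin k) (Fin m) (Fin n))).toLinearIsometry.toContinuousLinearMap))) := by
  set L := pencil A (fun i => X i - oneKron (Fin m) (Y i)) with hLdef
  set P := pencil A (fun j => Z j - oneKron (Fin k × Fin m) (Y j)) with hPdef
  set Q := pencil (transA Y A X)
      (fun j => Matrix.reindex (Equiv.prodAssoc (Fin k) (Fin m) (Fin n))
          (Equiv.prodAssoc (Fin k) (Fin m) (Fin n)) (Z j) -
        oneKron (Fin k) (X j)) with hQdef
  set Ucl := (curryIso (Fin k) (Fin m) H).toLinearIsometry.toContinuousLinearMap with hUcl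
  set Usy := (curryIso (Fin k) (Fin m) H).symm.toLinearIsometry.toContinuousLinearMap with hUsy
  have key : Ucl.comp P = ((diagAmp L).comp Q).comp Ucl := key_pencil Y A hA X hX Z
  have hUU : Ucl.comp Usy = 1 :=
    ContinuousLinearMap.ext fun x => (curryIso (Fin k) (Fin m) H).apply_symm_apply x
  have hUU' : Usy.comp Ucl = 1 :=
    ContinuousLinearMap.ext fun x => (curryIso (Fin k) (Fin m) H).symm_apply_apply x
  have keyconj : Ucl.comp (P.comp Usy) = (diagAmp L).comp Q := by
    calc Ucl.comp (P.comp Usy) = (Ucl.comp P).comp Usy :=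
          (ContinuousLinearMap.comp_assoc _ _ _).symm
      _ = (((diagAmp L).comp Q).comp Ucl).comp Usy := by rw [key]
      _ = ((diagAmp L).comp Q).comp (Ucl.comp Usy) := ContinuousLinearMap.comp_assoc _ _ _
      _ = (diagAmp L).comp Q := by rw [hUU, hone2]
  have hLS : L.comp (Ring.inverse L) = 1 := by
    rw [← ContinuousLinearMap.mul_def, Ring.mul_inverse_cancel _ hX]
  have hSL : (Ring.inverse L).comp L = 1 := by
    rw [← ContinuousLinearMap.mul_def, Ring.inverse_mul_cancel _ hX]
  have hdLunit : IsUnit (diagAmp (μ := Fin k) L) := by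
    refine isUnit_iff_exists.mpr ⟨diagAmp (Ring.inverse L), ?_, ?_⟩
    · rw [ContinuousLinearMap.mul_def, ← diagAmp_comp, hLS, diagAmp_one]
    · rw [ContinuousLinearMap.mul_def, ← diagAmp_comp, hSL, diagAmp_one]
  have hiff : IsUnit P ↔ IsUnit Q := by
    rw [← isUnit_conj (curryIso (Fin k) (Fin m) H) P]
    rw [show (curryIso (Fin k) (Fin m) H).toLinearIsometry.toContinuousLinearMap.comp
      (P.comp (curryIso (Fin k) (Fin m) H).symm.toLinearIsometry.toContinuousLinearMap)
      = (diagAmp L).comp Q from keyconj]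
    have := Units.isUnit_units_mul hdLunit.unit Q
    rw [IsUnit.unit_spec] at this
    rw [← this, ContinuousLinearMap.mul_def]
  refine ⟨hiff, ?_, ?_⟩
  · -- resolvent formula
    intro hP
    have hQ : IsUnit Q := hiff.mp hP
    have h1 : (Ucl.comp ((Ring.inverse P).comp Usy)) * ((diagAmp L).comp Q) = 1 := by
      rw [← keyconj]
      refine ContinuousLinearMap.ext fun x => ?_
      show (curryIso (Fin k) (Fin m) H) ((Ring.inverse P)
        ((curryIso (Fin k) (Fin m) H).symm ((curryIso (Fin k) (Fin m) H)
          (P ((curryIso (Fin k) (Fin m) H).symm x))))) = x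
      rw [(curryIso (Fin k) (Fin m) H).symm_apply_apply]
      rw [← ContinuousLinearMap.mul_apply, Ring.inverse_mul_cancel _ hP]
      show (curryIso (Fin k) (Fin m) H) ((curryIso (Fin k) (Fin m) H).symm x) = x
      exact (curryIso (Fin k) (Fin m) H).apply_symm_apply x
    have h2 : ((diagAmp L).comp Q) * ((Ring.inverse Q).comp (diagAmp (Ring.inverse L))) = 1 := by
      refine ContinuousLinearMap.ext fun x => ?_
      show diagAmp L (Q ((Ring.inverse Q) (diagAmp (Ring.inverse L) x))) = x
      rw [← ContinuousLinearMap.mul_apply Q, Ring.mul_inverse_cancel _ hQ]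
      show diagAmp L (diagAmp (Ring.inverse L) x) = x
      rw [← ContinuousLinearMap.comp_apply, ← diagAmp_comp, hLS, diagAmp_one]
      rfl
    exact left_inv_eq_right_inv h1 h2
  · -- transfer functions agree
    intro hP
    have hQ : IsUnit Q := hiff.mp hP
    set Vcl := (LinearIsometryEquiv.piLpCongrLeft 2 ℂ ℂ
      (Equiv.prodAssoc (Fin k) (Fin m) (Fin n))).toLinearIsometry.toContinuousLinearMap with hVcl
    set Vsy := (LinearIsometryEquiv.piLpCongrLeft 2 ℂ ℂ
      (Equiv.prodAssoc (Fin k) (Fin m) (Fin n))).symm.toLinearIsometry.toContinuousLinearMap with hVsy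
    -- operator identities
    have hVV : Vcl.comp Vsy = 1 :=
      ContinuousLinearMap.ext fun x => (LinearIsometryEquiv.piLpCongrLeft 2 ℂ ℂ
        (Equiv.prodAssoc (Fin k) (Fin m) (Fin n))).apply_symm_apply x
    have E1op : ampVec (μ := Fin k) (ampVec (μ := Fin m) b)
        = Ucl.comp ((ampVec b).comp Vsy) := by
      calc ampVec (μ := Fin k) (ampVec (μ := Fin m) b)
          = (ampVec (μ := Fin k) (ampVec (μ := Fin m) b)).comp (Vcl.comp Vsy) := by
            rw [hVV, hone2]
        _ = ((ampVec (μ := Fin k) (ampVec (μ := Fin m) b)).comp Vcl).comp Vsy :=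
            (ContinuousLinearMap.comp_assoc _ _ _).symm
        _ = (Ucl.comp (ampVec b)).comp Vsy := by rw [← curry_ampVec]
        _ = Ucl.comp ((ampVec b).comp Vsy) := ContinuousLinearMap.comp_assoc _ _ _
    have E3op : ContinuousLinearMap.adjoint (ampVec (μ := Fin k) (ampVec (μ := Fin m) b))
        = (Vcl.comp (ContinuousLinearMap.adjoint (ampVec (μ := Fin k × Fin m) b))).comp Usy := by
      rw [E1op, ContinuousLinearMap.adjoint_comp, ContinuousLinearMap.adjoint_comp,
        adjoint_isoCLM, adjoint_isoCLM, LinearIsometryEquiv.symm_symm]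
    have E2op : ampVec (μ := Fin k) (transC Y A X c)
        = (diagAmp (Ring.inverse L)).comp (ampVec (μ := Fin k) (ampVec (μ := Fin m) c)) :=
      ampVec_comp_left _ _
    have part2 : Ucl.comp ((Ring.inverse P).comp Usy)
        = (Ring.inverse Q).comp (diagAmp (Ring.inverse L)) := by
      have h1 : (Ucl.comp ((Ring.inverse P).comp Usy)) * ((diagAmp L).comp Q) = 1 := by
        rw [← keyconj]
        refine ContinuousLinearMap.ext fun x => ?_
        show (curryIso (Fin k) (Fin m) H) ((Ring.inverse P)
          ((curryIso (Fin k) (Fin m) H).symm ((curryIso (Fin k) (Fin m) H)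
            (P ((curryIso (Fin k) (Fin m) H).symm x))))) = x
        rw [(curryIso (Fin k) (Fin m) H).symm_apply_apply]
        rw [← ContinuousLinearMap.mul_apply, Ring.inverse_mul_cancel _ hP]
        exact (curryIso (Fin k) (Fin m) H).apply_symm_apply x
      have h2 : ((diagAmp L).comp Q) * ((Ring.inverse Q).comp (diagAmp (Ring.inverse L))) = 1 := by
        refine ContinuousLinearMap.ext fun x => ?_
        show diagAmp L (Q ((Ring.inverse Q) (diagAmp (Ring.inverse L) x))) = x
        rw [← ContinuousLinearMap.mul_apply Q, Ring.mul_inverse_cancel _ hQ]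
        show diagAmp L (diagAmp (Ring.inverse L) x) = x
        rw [← ContinuousLinearMap.comp_apply, ← diagAmp_comp, hLS, diagAmp_one]
        rfl
      exact left_inv_eq_right_inv h1 h2
    refine ContinuousLinearMap.ext fun x => ?_
    simp only [transfer, ContinuousLinearMap.comp_apply]
    -- abbreviations for the vectors involved
    have s2 : ampVec (μ := Fin k) (ampVec (μ := Fin m) c) (Vcl x)
        = Ucl (ampVec c x) := by
      have := DFunLike.congr_fun (curry_ampVec (κ := Fin k) (μ := Fin m) c) x
      rw [ContinuousLinearMap.comp_apply, ContinuousLinearMap.comp_apply] at this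
      exact this.symm
    have s1 : ampVec (μ := Fin k) (transC Y A X c) (Vcl x)
        = diagAmp (Ring.inverse L) (Ucl (ampVec c x)) := by
      rw [E2op, ContinuousLinearMap.comp_apply, s2]
    have s3 : Ring.inverse Q (diagAmp (Ring.inverse L) (Ucl (ampVec c x)))
        = Ucl (Ring.inverse P (ampVec c x)) := by
      have h := DFunLike.congr_fun part2 (Ucl (ampVec c x))
      simp only [ContinuousLinearMap.comp_apply] at h
      rw [← h]
      congr 1
    have s4 : ContinuousLinearMap.adjoint (ampVec (μ := Fin k) (ampVec (μ := Fin m) b))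
        (Ucl (Ring.inverse P (ampVec c x)))
        = Vcl (ContinuousLinearMap.adjoint (ampVec (μ := Fin k × Fin m) b)
            (Ring.inverse P (ampVec c x))) := by
      rw [E3op, ContinuousLinearMap.comp_apply, ContinuousLinearMap.comp_apply]
      congr 1
    have hTB : ampVec (μ := Fin k) (transB (m := m) b)
        = ampVec (μ := Fin k) (ampVec (μ := Fin m) b) := rfl
    rw [hTB, s1, s3, s4]
    exact ((LinearIsometryEquiv.piLpCongrLeft 2 ℂ ℂ
      (Equiv.prodAssoc (Fin k) (Fin m) (Fin n))).symm_apply_apply _).symm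

end MC
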